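/- arXiv:2003.14138 — 2 statements merged into one kernel-verified Lean document; each statement's English description precedes it below -/
import Mathlib

section
/- Triangle–triangle C¹ condition: Let f¹, f² be polynomials of total degree p in the triangular Bernstein bases with ordinates b⁽¹⁾, b⁽²⁾, and let α₁, α₂, β₁, β₂ be real constants with α₁, α₂ ≠ 0. Then the pair of relations ∂ᵤf^ℓ(0,v) − βₗ ∂ᵥf^ℓ(0,v) = αₗ Σ_{j=0}^{p-1} d_j B_j^{p-1}(v) for ℓ = 1,2 together with f¹(0,v) = f²(0,v) holds for all v if and only if there exist coefficients c₀,...,c_p, d₀,...,d_{p-1} with b^ℓ_{0,j,p-j} = c_j for j = 0,...,p and b^ℓ_{1,j,p-1-j} = c_j + βₗ(c_{j+1}−c_j) + (1/p)αₗ d_j for j = 0,...,p-1, ℓ = 1,2. -/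
open Finset

noncomputable section

/-- Univariate Bernstein polynomial `B_j^q(v) = C(q,j) v^j (1-v)^(q-j)`. -/
def bern (q j : ℕ) (v : ℝ) : ℝ := (q.choose j : ℝ) * v ^ j * (1 - v) ^ (q - j)

/-- Polynomial of total degree `p` in the triangular Bernstein basis with
ordinates `b i j k` (for `i + j + k = p`). -/
def triPoly (p : ℕ) (b : ℕ → ℕ → ℕ → ℝ) (u v : ℝ) : ℝ :=
  ∑ i ∈ range (p + 1), ∑ j ∈ range (p + 1 - i),
    b i j (p - i - j) *
      ((p.factorial : ℝ) / ((i.factorial : ℝ) * (j.factorial : ℝ) * ((p - i - j).factorial : ℝ))) *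
      u ^ i * v ^ j * (1 - u - v) ^ (p - i - j)



lemma aux_zero : ∀ (q : ℕ) (a : ℕ → ℝ),
    (∀ v : ℝ, ∑ j ∈ range (q + 1), a j * v ^ j * (1 - v) ^ (q - j) = 0) →
    ∀ j ≤ q, a j = 0 := by
  intro q
  induction q with
  | zero =>
    intro a h j hj
    interval_cases j
    simpa using h 0
  | succ q ih =>
    intro a h
    have htop : a (q + 1) = 0 := by
      have h1 := h 1
      rw [Finset.sum_range_succ] at h1
      have hz : ∑ j ∈ range (q + 1), a j * (1:ℝ) ^ j * (1 - 1) ^ (q + 1 - j) = 0 := by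
        apply Finset.sum_eq_zero
        intro j hj
        have : (q + 1 - j) ≠ 0 := Nat.sub_ne_zero_of_lt (mem_range.mp hj)
        simp [zero_pow this]
      rw [hz] at h1
      simpa using h1
    have hne : ∀ v : ℝ, v ≠ 1 →
        ∑ j ∈ range (q + 1), a j * v ^ j * (1 - v) ^ (q - j) = 0 := by
      intro v hv
      have h2 := h v
      rw [Finset.sum_range_succ, htop] at h2
      simp only [zero_mul, add_zero] at h2
      have hfac : ∑ j ∈ range (q + 1), a j * v ^ j * (1 - v) ^ (q + 1 - j) =
          (1 - v) * ∑ j ∈ range (q + 1), a j * v ^ j * (1 - v) ^ (q - j) := by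
        rw [Finset.mul_sum]
        apply Finset.sum_congr rfl
        intro j hj
        have hj' : q + 1 - j = (q - j) + 1 := by
          have := mem_range.mp hj; omega
        rw [hj', pow_succ]
        ring
      rw [hfac] at h2
      rcases mul_eq_zero.mp h2 with h3 | h3
      · exact absurd (by linarith : v = 1) hv
      · exact h3
    have hall : ∀ v : ℝ, ∑ j ∈ range (q + 1), a j * v ^ j * (1 - v) ^ (q - j) = 0 := by
      have hcont : Continuous (fun v : ℝ => ∑ j ∈ range (q + 1), a j * v ^ j * (1 - v) ^ (q - j)) := by
        apply continuous_finset_sum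
        intro j _
        exact ((continuous_const.mul (continuous_pow j)).mul
          ((continuous_const.sub continuous_id).pow _))
      have := Continuous.ext_on (dense_compl_singleton (1:ℝ)) hcont continuous_const
        (fun v hv => hne v hv)
      intro v
      exact congrFun this v
    intro j hj
    rcases Nat.lt_or_ge j (q + 1) with h' | h'
    · exact ih a hall j (by omega)
    · have : j = q + 1 := by omega
      rw [this]; exact htop

lemma bern_zero_iff (q : ℕ) (a : ℕ → ℝ) :
    (∀ v : ℝ, ∑ j ∈ range (q + 1), a j * bern q j v = 0) ↔ ∀ j ≤ q, a j = 0 := by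
  constructor
  · intro h j hj
    have h' : ∀ v : ℝ, ∑ j ∈ range (q + 1), (a j * (q.choose j : ℝ)) * v ^ j * (1 - v) ^ (q - j) = 0 := by
      intro v
      rw [← h v]
      apply Finset.sum_congr rfl
      intro j _
      simp [bern]; ring
    have := aux_zero q (fun j => a j * (q.choose j : ℝ)) h' j hj
    have hch : (q.choose j : ℝ) ≠ 0 := by
      exact_mod_cast (Nat.choose_pos hj).ne'
    exact (mul_eq_zero.mp this).resolve_right hch
  · intro h v
    apply Finset.sum_eq_zero
    intro j hj
    rw [h j (Nat.lt_succ_iff.mp (mem_range.mp hj))]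
    ring




lemma choose_id (p j : ℕ) : p.choose j * (p - j) = p * (p - 1).choose j := by
  rcases Nat.lt_or_ge j p with h | h
  · rcases Nat.exists_eq_add_of_le (Nat.one_le_iff_ne_zero.mpr (by omega : p ≠ 0)) with ⟨m, hm⟩
    subst hm
    have h1 := Nat.choose_succ_right_eq (1 + m) j
    have h2 := Nat.add_one_mul_choose_eq m j
    have e0 : (1 + m) - 1 = m := by omega
    rw [e0]
    have e1 : 1 + m = m + 1 := by omega
    rw [e1] at h1 ⊢
    omega
  · have h1 : p - j = 0 := by omega
    rcases Nat.eq_or_lt_of_le h with rfl | h2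
    · rcases Nat.eq_zero_or_pos p with rfl | hp
      · simp
      · rw [h1, Nat.choose_eq_zero_of_lt (by omega : p - 1 < p)]
        simp
    · rw [h1, Nat.choose_eq_zero_of_lt h2, Nat.choose_eq_zero_of_lt (by omega)]
      simp

lemma coefB (p j : ℕ) : (p.choose j : ℝ) * (((p - j) : ℕ) : ℝ) = (p : ℝ) * (((p - 1).choose j : ℕ) : ℝ) := by
  exact_mod_cast congrArg (Nat.cast : ℕ → ℝ) (choose_id p j)

lemma coefA (p j : ℕ) (hp : 1 ≤ p) (hj : j < p) :
    (p.factorial : ℝ) / ((j.factorial : ℝ) * (((p - 1 - j).factorial : ℕ) : ℝ)) =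
      (p : ℝ) * ((p - 1).choose j : ℝ) := by
  have h1 : ((p.factorial : ℕ) : ℝ) = (p : ℝ) * ((p - 1).factorial : ℝ) := by
    exact_mod_cast (Nat.mul_factorial_pred (by omega)).symm
  have h2 : ((p - 1).choose j : ℝ) =
      ((p - 1).factorial : ℝ) / ((j.factorial : ℝ) * (((p - 1) - j).factorial : ℝ)) :=
    Nat.cast_choose ℝ (by omega)
  rw [h1, h2]
  have hj1 : (j.factorial : ℝ) ≠ 0 := by positivity
  have hj2 : (((p - 1 - j).factorial : ℕ) : ℝ) ≠ 0 := by positivity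
  field_simp

lemma coefC (p j : ℕ) (hp : 1 ≤ p) :
    (p.choose (j + 1) : ℝ) * (((j + 1) : ℕ) : ℝ) = (p : ℝ) * ((p - 1).choose j : ℝ) := by
  have h := Nat.add_one_mul_choose_eq (p - 1) j
  have e : p - 1 + 1 = p := by omega
  simp only [Nat.succ_eq_add_one, e] at h
  exact_mod_cast congrArg (Nat.cast : ℕ → ℝ) h.symm

lemma fact_div_choose (p j : ℕ) (hj : j ≤ p) :
    (p.factorial : ℝ) / ((j.factorial : ℝ) * ((p - j).factorial : ℝ)) = (p.choose j : ℝ) := by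
  rw [Nat.cast_choose ℝ hj]

lemma triPoly_zero (p : ℕ) (b : ℕ → ℕ → ℕ → ℝ) (v : ℝ) :
    triPoly p b 0 v = ∑ j ∈ range (p + 1), b 0 j (p - j) * bern p j v := by
  unfold triPoly
  rw [Finset.sum_eq_single 0]
  · apply Finset.sum_congr (by simp)
    intro j hj
    have hjp : j ≤ p := by have := mem_range.mp hj; omega
    rw [bern, ← fact_div_choose p j hjp]
    simp only [Nat.sub_zero, Nat.zero_sub]
    norm_num
    ring
  · intro i hi hne
    apply Finset.sum_eq_zero
    intro j _
    rw [zero_pow hne]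
    ring
  · intro h
    simp at h

lemma deriv_u (p : ℕ) (hp : 1 ≤ p) (b : ℕ → ℕ → ℕ → ℝ) (v : ℝ) :
    deriv (fun u => triPoly p b u v) 0 =
      ∑ j ∈ range p, (p : ℝ) * (b 1 j (p - 1 - j) - b 0 j (p - j)) * bern (p - 1) j v := by
  have key : HasDerivAt (fun u => triPoly p b u v)
      (∑ i ∈ range (p + 1), ∑ j ∈ range (p + 1 - i),
        ((b i j (p - i - j) *
            ((p.factorial : ℝ) / ((i.factorial : ℝ) * (j.factorial : ℝ) * ((p - i - j).factorial : ℝ))) *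
            ((i : ℝ) * (0 : ℝ) ^ (i - 1)) * v ^ j) * (1 - 0 - v) ^ (p - i - j)
          + (b i j (p - i - j) *
              ((p.factorial : ℝ) / ((i.factorial : ℝ) * (j.factorial : ℝ) * ((p - i - j).factorial : ℝ))) *
              (0 : ℝ) ^ i * v ^ j) *
            (((p - i - j : ℕ) : ℝ) * (1 - 0 - v) ^ (p - i - j - 1) * (-1)))) 0 := by
    simp only [triPoly]
    apply HasDerivAt.fun_sum
    intro i _
    apply HasDerivAt.fun_sum
    intro j _
    exact (((hasDerivAt_pow i (0 : ℝ)).const_mul _).mul_const (v ^ j)).mul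
      ((((hasDerivAt_id (0 : ℝ)).const_sub 1).sub_const v).pow _)
  rw [key.deriv]
  simp only [show (1:ℝ) - 0 - v = 1 - v from by ring, Finset.sum_add_distrib]
  have hS1 : (∑ i ∈ range (p + 1), ∑ j ∈ range (p + 1 - i),
      b i j (p - i - j) *
          ((p.factorial : ℝ) / ((i.factorial : ℝ) * (j.factorial : ℝ) * ((p - i - j).factorial : ℝ))) *
          ((i : ℝ) * (0 : ℝ) ^ (i - 1)) * v ^ j * (1 - v) ^ (p - i - j)) =
      ∑ j ∈ range p, (p : ℝ) * ((p - 1).choose j : ℝ) * b 1 j (p - 1 - j) * v ^ j * (1 - v) ^ (p - 1 - j) := by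
    rw [Finset.sum_eq_single 1]
    · rw [show p + 1 - 1 = p from by omega]
      apply Finset.sum_congr rfl
      intro j hj
      have hjp : j < p := mem_range.mp hj
      have hA : (p.factorial : ℝ) / (((Nat.factorial 1 : ℕ) : ℝ) * (j.factorial : ℝ) * ((p - 1 - j).factorial : ℝ)) =
          (p : ℝ) * ((p - 1).choose j : ℝ) := by
        rw [Nat.factorial_one, Nat.cast_one, one_mul]
        exact coefA p j hp hjp
      linear_combination (b 1 j (p - 1 - j) * (((1:ℕ) : ℝ) * (0 : ℝ) ^ (1 - 1)) * v ^ j *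
        (1 - v) ^ (p - 1 - j)) * hA
    · intro i hi hne
      apply Finset.sum_eq_zero
      intro j _
      rcases Nat.eq_zero_or_pos i with rfl | hpos
      · norm_num
      · rw [zero_pow (show i - 1 ≠ 0 from by omega)]
        ring
    · intro h
      exfalso; apply h; exact mem_range.mpr (by omega)
  have hS2 : (∑ i ∈ range (p + 1), ∑ j ∈ range (p + 1 - i),
      b i j (p - i - j) *
          ((p.factorial : ℝ) / ((i.factorial : ℝ) * (j.factorial : ℝ) * ((p - i - j).factorial : ℝ))) *
          (0 : ℝ) ^ i * v ^ j *
        (((p - i - j : ℕ) : ℝ) * (1 - v) ^ (p - i - j - 1) * (-1))) =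
      ∑ j ∈ range p, -((p : ℝ) * ((p - 1).choose j : ℝ) * b 0 j (p - j) * v ^ j * (1 - v) ^ (p - 1 - j)) := by
    rw [Finset.sum_eq_single 0]
    · simp only [Nat.sub_zero, pow_zero, Nat.factorial_zero, Nat.cast_one, one_mul, mul_one]
      rw [Finset.sum_range_succ]
      simp only [Nat.sub_self, Nat.cast_zero, zero_mul, mul_zero, add_zero]
      apply Finset.sum_congr rfl
      intro j hj
      have hjp : j < p := mem_range.mp hj
      have hch := fact_div_choose p j (le_of_lt hjp)
      have hB := coefB p j
      rw [show p - j - 1 = p - 1 - j from by omega]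
      linear_combination (-(b 0 j (p - j) * v ^ j * (1 - v) ^ (p - 1 - j) * (((p - j : ℕ)) : ℝ))) * hch +
        (-(b 0 j (p - j) * v ^ j * (1 - v) ^ (p - 1 - j))) * hB
    · intro i hi hne
      apply Finset.sum_eq_zero
      intro j _
      rw [zero_pow hne]
      ring
    · intro h
      exfalso; apply h; exact mem_range.mpr (by omega)
  rw [hS1, hS2, ← Finset.sum_add_distrib]
  apply Finset.sum_congr rfl
  intro j _
  rw [bern]
  ring

lemma deriv_v (p : ℕ) (hp : 1 ≤ p) (b : ℕ → ℕ → ℕ → ℝ) (v : ℝ) :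
    deriv (fun w => triPoly p b 0 w) v =
      ∑ j ∈ range p, (p : ℝ) * (b 0 (j + 1) (p - (j + 1)) - b 0 j (p - j)) * bern (p - 1) j v := by
  have hfun : (fun w => triPoly p b 0 w) =
      fun w => ∑ j ∈ range (p + 1), b 0 j (p - j) * bern p j w :=
    funext (triPoly_zero p b)
  rw [hfun]
  have key : HasDerivAt (fun w => ∑ j ∈ range (p + 1), b 0 j (p - j) * bern p j w)
      (∑ j ∈ range (p + 1),
        b 0 j (p - j) *
          ((p.choose j : ℝ) * ((j : ℝ) * v ^ (j - 1)) * (1 - v) ^ (p - j)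
            + (p.choose j : ℝ) * v ^ j *
              (((p - j : ℕ) : ℝ) * (1 - v) ^ (p - j - 1) * (-1)))) v := by
    simp only [bern]
    apply HasDerivAt.fun_sum
    intro j _
    exact ((((hasDerivAt_pow j v).const_mul _).mul
      ((((hasDerivAt_id v).const_sub 1)).pow _)).const_mul _)
  rw [key.deriv]
  simp only [mul_add, Finset.sum_add_distrib]
  have hS1 : (∑ j ∈ range (p + 1),
      b 0 j (p - j) * ((p.choose j : ℝ) * ((j : ℝ) * v ^ (j - 1)) * (1 - v) ^ (p - j))) =
      ∑ j ∈ range p, (p : ℝ) * ((p - 1).choose j : ℝ) * b 0 (j + 1) (p - (j + 1)) * v ^ j * (1 - v) ^ (p - 1 - j) := by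
    rw [Finset.sum_range_succ']
    simp only [Nat.cast_zero, zero_mul, mul_zero, add_zero]
    apply Finset.sum_congr rfl
    intro j hj
    have hjp : j < p := mem_range.mp hj
    have hC := coefC p j hp
    rw [show (j + 1) - 1 = j from by omega, show p - (j + 1) = p - 1 - j from by omega]
    linear_combination (b 0 (j + 1) (p - 1 - j) * v ^ j * (1 - v) ^ (p - 1 - j)) * hC
  have hS2 : (∑ j ∈ range (p + 1),
      b 0 j (p - j) * ((p.choose j : ℝ) * v ^ j * (((p - j : ℕ) : ℝ) * (1 - v) ^ (p - j - 1) * (-1)))) =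
      ∑ j ∈ range p, -((p : ℝ) * ((p - 1).choose j : ℝ) * b 0 j (p - j) * v ^ j * (1 - v) ^ (p - 1 - j)) := by
    rw [Finset.sum_range_succ]
    simp only [Nat.sub_self, Nat.cast_zero, zero_mul, mul_zero, add_zero]
    apply Finset.sum_congr rfl
    intro j hj
    have hjp : j < p := mem_range.mp hj
    have hB := coefB p j
    rw [show p - j - 1 = p - 1 - j from by omega]
    linear_combination (-(b 0 j (p - j) * v ^ j * (1 - v) ^ (p - 1 - j))) * hB
  rw [hS1, hS2, ← Finset.sum_add_distrib]
  apply Finset.sum_congr rfl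
  intro j hj
  rw [bern, show p - (j + 1) = p - 1 - j from by omega]
  ring

lemma key_sub (p : ℕ) (hp : 1 ≤ p) (b : ℕ → ℕ → ℕ → ℝ) (β v : ℝ) :
    deriv (fun u => triPoly p b u v) 0 - β * deriv (fun w => triPoly p b 0 w) v =
      ∑ j ∈ range p,
        ((p : ℝ) * (b 1 j (p - 1 - j) - b 0 j (p - j) -
          β * (b 0 (j + 1) (p - (j + 1)) - b 0 j (p - j)))) * bern (p - 1) j v := by
  rw [deriv_u p hp b v, deriv_v p hp b v, Finset.mul_sum, ← Finset.sum_sub_distrib]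
  apply Finset.sum_congr rfl
  intro j _
  ring

lemma cond_iff (p : ℕ) (hp : 1 ≤ p) (b : ℕ → ℕ → ℕ → ℝ) (β α : ℝ) (d : ℕ → ℝ) :
    (∀ v : ℝ, deriv (fun u => triPoly p b u v) 0 - β * deriv (fun w => triPoly p b 0 w) v =
      α * ∑ j ∈ range p, d j * bern (p - 1) j v) ↔
    ∀ j < p, b 1 j (p - 1 - j) =
      b 0 j (p - j) + β * (b 0 (j + 1) (p - (j + 1)) - b 0 j (p - j)) + (1 / (p : ℝ)) * α * d j := by
  have hq : p - 1 + 1 = p := by omega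
  have hpne : (p : ℝ) ≠ 0 := Nat.cast_ne_zero.mpr (by omega)
  constructor
  · intro h j hj
    have h2 : ∀ v : ℝ, ∑ j ∈ range ((p - 1) + 1),
        (((p : ℝ) * (b 1 j (p - 1 - j) - b 0 j (p - j) -
          β * (b 0 (j + 1) (p - (j + 1)) - b 0 j (p - j)))) - α * d j) * bern (p - 1) j v = 0 := by
      intro v
      rw [hq]
      have hv := h v
      rw [key_sub p hp b β v] at hv
      rw [Finset.mul_sum] at hv
      simp only [sub_mul]
      rw [Finset.sum_sub_distrib, hv]
      rw [sub_eq_zero]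
      apply Finset.sum_congr rfl
      intro j _
      ring
    have h3 := (bern_zero_iff (p - 1) _).mp h2 j (by omega)
    have h4 : (p : ℝ) * b 1 j (p - 1 - j) =
        (p : ℝ) * (b 0 j (p - j) + β * (b 0 (j + 1) (p - (j + 1)) - b 0 j (p - j)) +
          (1 / (p : ℝ)) * α * d j) := by
      field_simp
      linear_combination h3
    exact mul_left_cancel₀ hpne h4
  · intro h v
    rw [key_sub p hp b β v, Finset.mul_sum]
    apply Finset.sum_congr rfl
    intro j hj
    rw [h j (mem_range.mp hj)]
    field_simp
    ring

lemma eq_iff (p : ℕ) (b₁ b₂ : ℕ → ℕ → ℕ → ℝ) :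
    (∀ v : ℝ, triPoly p b₁ 0 v = triPoly p b₂ 0 v) ↔
    ∀ j ≤ p, b₁ 0 j (p - j) = b₂ 0 j (p - j) := by
  constructor
  · intro h
    have h2 : ∀ v : ℝ, ∑ j ∈ range (p + 1),
        (b₁ 0 j (p - j) - b₂ 0 j (p - j)) * bern p j v = 0 := by
      intro v
      have hv := h v
      rw [triPoly_zero, triPoly_zero] at hv
      simp only [sub_mul]
      rw [Finset.sum_sub_distrib, hv, sub_self]
    intro j hj
    have := (bern_zero_iff p _).mp h2 j hj
    linarith
  · intro h v
    rw [triPoly_zero, triPoly_zero]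
    apply Finset.sum_congr rfl
    intro j hj
    rw [h j (Nat.lt_succ_iff.mp (mem_range.mp hj))]

theorem triangle_triangle_C1_condition (p : ℕ) (hp : 1 ≤ p)
    (b₁ b₂ : ℕ → ℕ → ℕ → ℝ) (α₁ α₂ β₁ β₂ : ℝ) (hα₁ : α₁ ≠ 0) (hα₂ : α₂ ≠ 0) :
    ((∀ v : ℝ, triPoly p b₁ 0 v = triPoly p b₂ 0 v) ∧
      ∃ d : ℕ → ℝ, ∀ v : ℝ,
        (deriv (fun u => triPoly p b₁ u v) 0 - β₁ * deriv (fun w => triPoly p b₁ 0 w) v =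
          α₁ * ∑ j ∈ range p, d j * bern (p - 1) j v) ∧
        (deriv (fun u => triPoly p b₂ u v) 0 - β₂ * deriv (fun w => triPoly p b₂ 0 w) v =
          α₂ * ∑ j ∈ range p, d j * bern (p - 1) j v)) ↔
    (∃ c d : ℕ → ℝ,
      (∀ j ≤ p, b₁ 0 j (p - j) = c j ∧ b₂ 0 j (p - j) = c j) ∧
      (∀ j < p,
        b₁ 1 j (p - 1 - j) = c j + β₁ * (c (j + 1) - c j) + (1 / (p : ℝ)) * α₁ * d j ∧
        b₂ 1 j (p - 1 - j) = c j + β₂ * (c (j + 1) - c j) + (1 / (p : ℝ)) * α₂ * d j)) := by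
  constructor
  · rintro ⟨h0, d, hd⟩
    have heq := (eq_iff p b₁ b₂).mp h0
    refine ⟨fun j => b₁ 0 j (p - j), d, ?_, ?_⟩
    · intro j hj
      exact ⟨rfl, (heq j hj).symm⟩
    · intro j hj
      have e1 := (cond_iff p hp b₁ β₁ α₁ d).mp (fun v => (hd v).1) j hj
      have e2 := (cond_iff p hp b₂ β₂ α₂ d).mp (fun v => (hd v).2) j hj
      refine ⟨e1, ?_⟩
      rw [e2, ← heq j (le_of_lt hj), ← heq (j + 1) hj]
  · rintro ⟨c, d, hc, hbd⟩
    have H0 : ∀ v : ℝ, triPoly p b₁ 0 v = triPoly p b₂ 0 v := by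
      apply (eq_iff p b₁ b₂).mpr
      intro j hj
      rw [(hc j hj).1, (hc j hj).2]
    have H1 := (cond_iff p hp b₁ β₁ α₁ d).mpr (by
      intro j hj
      rw [(hc j (le_of_lt hj)).1, (hc (j + 1) hj).1]
      exact (hbd j hj).1)
    have H2 := (cond_iff p hp b₂ β₂ α₂ d).mpr (by
      intro j hj
      rw [(hc j (le_of_lt hj)).2, (hc (j + 1) hj).2]
      exact (hbd j hj).2)
    exact ⟨H0, d, fun v => ⟨H1 v, H2 v⟩⟩
end
end

section
/- If φ : Ω̄ → ℝ restricts to φ¹ on the closure of Ω¹ and φ² on Ω², where Ωˡ is parametrized by a regular C¹ bijection Fˡ with F¹(0,v) = F²(0,v) for v ∈ [0,1], and fˡ = φˡ ∘ Fˡ are C¹, then φ is C¹ across the common interface if and only if f¹(0,v) = f²(0,v) and ω¹ₙ(0,v) = ω²ₙ(0,v) for all v ∈ [0,1], where ωˡₙ(0,v) = (β/αₗ(v))·(∂ᵤfˡ(0,v) − βₗ(v)∂ᵥfˡ(0,v)) is the representation of the normal derivative ∂φˡ/∂n in local coordinates, with αₗ(v) = det JFˡ(0,v), β = ⟨n, (∂ᵥF¹(0,v))⊥⟩,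 βₗ(v) = ⟨n, (∂ᵤFˡ(0,v))⊥⟩/β, and n the unit normal to the interface. -/
open Set

noncomputable section

def det2 (a b : ℝ × ℝ) : ℝ := a.1 * b.2 - a.2 * b.1
def perp (a : ℝ × ℝ) : ℝ × ℝ := (a.2, -a.1)
def dot (a b : ℝ × ℝ) : ℝ := a.1 * b.1 + a.2 * b.2
def pd1 (F : ℝ × ℝ → ℝ × ℝ) (p : ℝ × ℝ) : ℝ × ℝ := fderiv ℝ F p (1, 0)
def pd2 (F : ℝ × ℝ → ℝ × ℝ) (p : ℝ × ℝ) : ℝ × ℝ := fderiv ℝ F p (0, 1)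
def detJ (F : ℝ × ℝ → ℝ × ℝ) (p : ℝ × ℝ) : ℝ := det2 (pd1 F p) (pd2 F p)
def pd1s (f : ℝ × ℝ → ℝ) (p : ℝ × ℝ) : ℝ := fderiv ℝ f p (1, 0)
def pd2s (f : ℝ × ℝ → ℝ) (p : ℝ × ℝ) : ℝ := fderiv ℝ f p (0, 1)

/-- The local-coordinate representation `ωₗ(0,v)` of the normal derivative
`∂φˡ/∂n` along the interface `u = 0`:
`ω = (β/α(v)) (∂ᵤf(0,v) − β̃(v) ∂ᵥf(0,v))` with `α(v) = det JF(0,v)`,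
`β(v) = ⟨n,(∂ᵥF(0,v))⊥⟩` and `β̃(v) = ⟨n,(∂ᵤF(0,v))⊥⟩/β(v)`. -/
def omegaN (n : ℝ × ℝ) (F : ℝ × ℝ → ℝ × ℝ) (f : ℝ × ℝ → ℝ) (v : ℝ) : ℝ :=
  (dot n (perp (pd2 F (0, v))) / detJ F (0, v)) *
    (pd1s f (0, v) -
      (dot n (perp (pd1 F (0, v))) / dot n (perp (pd2 F (0, v)))) * pd2s f (0, v))

lemma comp_pds {φ : ℝ × ℝ → ℝ} {F : ℝ × ℝ → ℝ × ℝ} (hφ : ContDiff ℝ 1 φ)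
    (hF : ContDiff ℝ 1 F) (p : ℝ × ℝ) :
    pd1s (φ ∘ F) p = fderiv ℝ φ (F p) (pd1 F p) ∧
    pd2s (φ ∘ F) p = fderiv ℝ φ (F p) (pd2 F p) := by
  have h := fderiv_comp p (hφ.differentiable one_ne_zero (F p)) (hF.differentiable one_ne_zero p)
  constructor <;> simp [pd1s, pd2s, pd1, pd2, h]

lemma slice_hasDerivAt {E : Type*} [NormedAddCommGroup E] [NormedSpace ℝ E]
    {f : ℝ × ℝ → E} (hf : ContDiff ℝ 1 f) (v : ℝ) :
    HasDerivAt (fun t => f (0, t)) (fderiv ℝ f (0, v) (0, 1)) v := by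
  have h1 : HasFDerivAt (fun t : ℝ => ((0:ℝ), t)) (ContinuousLinearMap.inr ℝ ℝ ℝ) v :=
    (ContinuousLinearMap.inr ℝ ℝ ℝ).hasFDerivAt
  have h2 := (hf.differentiable one_ne_zero ((0:ℝ), v)).hasFDerivAt
  have h3 := (h2.comp v h1).hasDerivAt
  simpa [Function.comp_def] using h3

lemma slice_deriv_cont {E : Type*} [NormedAddCommGroup E] [NormedSpace ℝ E]
    {f : ℝ × ℝ → E} (hf : ContDiff ℝ 1 f) :
    Continuous (fun v : ℝ => fderiv ℝ f (0, v) (0, 1)) := by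
  have h1 : Continuous fun p : ℝ × ℝ => fderiv ℝ f p := hf.continuous_fderiv one_ne_zero
  have h2 : Continuous fun v : ℝ => ((0:ℝ), v) := by continuity
  exact (ContinuousLinearMap.apply ℝ E (((0:ℝ), (1:ℝ)))).continuous.comp (h1.comp h2)

lemma key_vec (n a b : ℝ × ℝ) :
    det2 a b • n = dot n (perp b) • a - dot n (perp a) • b := by
  apply Prod.ext <;> simp [det2, dot, perp] <;> ring

lemma omega_rep (L : (ℝ × ℝ) →L[ℝ] ℝ) (n a b : ℝ × ℝ) (hd : det2 a b ≠ 0)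
    (hb : dot n (perp b) ≠ 0) :
    (dot n (perp b) / det2 a b) *
      (L a - (dot n (perp a) / dot n (perp b)) * L b) = L n := by
  have h := congrArg L (key_vec n a b)
  simp only [map_smul, map_sub, smul_eq_mul] at h
  field_simp
  linear_combination (-1 : ℝ) * h

lemma decomp (n b w : ℝ × ℝ) (hnb : dot n b = 0) :
    (dot b b * dot n (perp b)) • w =
      (dot w b * dot n (perp b)) • b + (dot w (perp b) * dot b b) • n := by
  obtain ⟨n₁, n₂⟩ := n; obtain ⟨b₁, b₂⟩ := b; obtain ⟨w₁, w₂⟩ := w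
  simp only [dot, perp] at *
  apply Prod.ext <;> simp [Prod.smul_def] <;>
    first
    | linear_combination (-(w₁*b₂ - w₂*b₁)*b₁) * hnb
    | linear_combination (-(w₁*b₂ - w₂*b₁)*b₂) * hnb

lemma derivEqOnIcc {E : Type*} [NormedAddCommGroup E] [NormedSpace ℝ E]
    {g₁ g₂ : ℝ → E} {d₁ d₂ : ℝ → E}
    (h : EqOn g₁ g₂ (Icc 0 1))
    (hd₁ : ∀ v, HasDerivAt g₁ (d₁ v) v) (hd₂ : ∀ v, HasDerivAt g₂ (d₂ v) v)
    (hc₁ : Continuous d₁) (hc₂ : Continuous d₂) :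
    EqOn d₁ d₂ (Icc 0 1) := by
  have hIoo : EqOn d₁ d₂ (Ioo 0 1) := by
    intro v hv
    have hmem : Ioo (0:ℝ) 1 ∈ nhds v := isOpen_Ioo.mem_nhds hv
    have heq : g₁ =ᶠ[nhds v] g₂ :=
      Filter.eventuallyEq_of_mem hmem (fun x hx => h (Ioo_subset_Icc_self hx))
    calc d₁ v = deriv g₁ v := (hd₁ v).deriv.symm
      _ = deriv g₂ v := heq.deriv_eq
      _ = d₂ v := (hd₂ v).deriv
  have := hIoo.closure hc₁ hc₂
  rwa [closure_Ioo (by norm_num : (0:ℝ) ≠ 1)] at this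


/-- An isoparametric function is `C¹` across the common interface (i.e. values and
gradients of the two pieces `φ¹, φ²` agree along the edge) iff the traces
`f¹(0,·) = f²(0,·)` agree and the local-coordinate normal derivatives
`ω¹ₙ(0,·) = ω²ₙ(0,·)` agree. -/
theorem C1_across_interface_iff (F₁ F₂ : ℝ × ℝ → ℝ × ℝ) (φ₁ φ₂ : ℝ × ℝ → ℝ)
    (f₁ f₂ : ℝ × ℝ → ℝ)
    (hF₁ : ContDiff ℝ 1 F₁) (hF₂ : ContDiff ℝ 1 F₂)
    (hF₁bij : Function.Injective F₁) (hF₂bij : Function.Injective F₂)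
    (hφ₁ : ContDiff ℝ 1 φ₁) (hφ₂ : ContDiff ℝ 1 φ₂)
    (hf₁ : f₁ = φ₁ ∘ F₁) (hf₂ : f₂ = φ₂ ∘ F₂)
    (hinterface : ∀ v ∈ Icc (0:ℝ) 1, F₁ (0, v) = F₂ (0, v))
    (hα₁ : ∀ v ∈ Icc (0:ℝ) 1, detJ F₁ (0, v) ≠ 0)
    (hα₂ : ∀ v ∈ Icc (0:ℝ) 1, detJ F₂ (0, v) ≠ 0)
    (n : ℝ × ℝ) (hn : dot n n = 1)
    (hnormal : ∀ v ∈ Icc (0:ℝ) 1, dot n (pd2 F₁ (0, v)) = 0)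
    (hβ : ∀ v ∈ Icc (0:ℝ) 1, dot n (perp (pd2 F₁ (0, v))) ≠ 0) :
    (∀ v ∈ Icc (0:ℝ) 1,
        φ₁ (F₁ (0, v)) = φ₂ (F₁ (0, v)) ∧
        fderiv ℝ φ₁ (F₁ (0, v)) = fderiv ℝ φ₂ (F₁ (0, v))) ↔
    (∀ v ∈ Icc (0:ℝ) 1,
        f₁ (0, v) = f₂ (0, v) ∧
        omegaN n F₁ f₁ v = omegaN n F₂ f₂ v) := by
  have htan : ∀ v ∈ Icc (0:ℝ) 1, pd2 F₁ (0, v) = pd2 F₂ (0, v) := by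
    have := derivEqOnIcc (g₁ := fun t => F₁ (0, t)) (g₂ := fun t => F₂ (0, t))
      (fun v hv => hinterface v hv)
      (fun v => slice_hasDerivAt hF₁ v) (fun v => slice_hasDerivAt hF₂ v)
      (slice_deriv_cont hF₁) (slice_deriv_cont hF₂)
    exact fun v hv => this hv
  have hrep₁ : ∀ v ∈ Icc (0:ℝ) 1,
      omegaN n F₁ f₁ v = fderiv ℝ φ₁ (F₁ (0, v)) n := by
    intro v hv
    obtain ⟨h1, h2⟩ := comp_pds hφ₁ hF₁ ((0:ℝ), v)
    rw [omegaN, hf₁, h1, h2]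
    exact omega_rep _ n _ _ (hα₁ v hv) (hβ v hv)
  have hrep₂ : ∀ v ∈ Icc (0:ℝ) 1,
      omegaN n F₂ f₂ v = fderiv ℝ φ₂ (F₁ (0, v)) n := by
    intro v hv
    obtain ⟨h1, h2⟩ := comp_pds hφ₂ hF₂ ((0:ℝ), v)
    rw [omegaN, hf₂, h1, h2, ← hinterface v hv]
    have hb2 : dot n (perp (pd2 F₂ (0, v))) ≠ 0 := by
      rw [← htan v hv]; exact hβ v hv
    exact omega_rep _ n _ _ (hα₂ v hv) hb2
  have htrace : ∀ v ∈ Icc (0:ℝ) 1,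
      (f₁ (0, v) = f₂ (0, v) ↔ φ₁ (F₁ (0, v)) = φ₂ (F₁ (0, v))) := by
    intro v hv
    rw [hf₁, hf₂]
    simp [Function.comp, ← hinterface v hv]
  constructor
  · intro h v hv
    obtain ⟨hval, hgrad⟩ := h v hv
    refine ⟨(htrace v hv).mpr hval, ?_⟩
    rw [hrep₁ v hv, hrep₂ v hv, hgrad]
  · intro h v hv
    have hval : φ₁ (F₁ (0, v)) = φ₂ (F₁ (0, v)) := (htrace v hv).mp (h v hv).1
    refine ⟨hval, ?_⟩
    have hfeq : EqOn (fun t => f₁ (0, t)) (fun t => f₂ (0, t)) (Icc 0 1) :=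
      fun t ht => (h t ht).1
    have hf₁' : ContDiff ℝ 1 f₁ := hf₁ ▸ hφ₁.comp hF₁
    have hf₂' : ContDiff ℝ 1 f₂ := hf₂ ▸ hφ₂.comp hF₂
    have hdtan : pd2s f₁ (0, v) = pd2s f₂ (0, v) :=
      derivEqOnIcc hfeq (fun t => slice_hasDerivAt hf₁' t)
        (fun t => slice_hasDerivAt hf₂' t)
        (slice_deriv_cont hf₁') (slice_deriv_cont hf₂') hv
    set L₁ := fderiv ℝ φ₁ (F₁ (0, v)) with hL₁
    set L₂ := fderiv ℝ φ₂ (F₁ (0, v)) with hL₂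
    set b := pd2 F₁ (0, v) with hb
    have hLn : L₁ n = L₂ n := by
      rw [← hrep₁ v hv, ← hrep₂ v hv]; exact (h v hv).2
    have hLb : L₁ b = L₂ b := by
      have e1 := (comp_pds hφ₁ hF₁ ((0:ℝ), v)).2
      have e2 := (comp_pds hφ₂ hF₂ ((0:ℝ), v)).2
      rw [← hf₁] at e1; rw [← hf₂] at e2
      rw [← hinterface v hv] at e2
      have : pd2 F₂ (0, v) = b := (htan v hv).symm
      rw [this] at e2
      rw [← e1, ← e2, hdtan]
    have hnpb : dot n (perp b) ≠ 0 := hβ v hv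
    have hbne : b ≠ 0 := by
      intro hb0
      apply hnpb
      rw [hb0]; simp [perp, dot]
    have hbb : dot b b ≠ 0 := by
      intro hbb0
      apply hbne
      obtain ⟨b₁, b₂⟩ := b
      simp only [dot] at hbb0
      have : b₁ = 0 ∧ b₂ = 0 := by constructor <;> nlinarith
      simp [this.1, this.2, Prod.ext_iff]
    apply ContinuousLinearMap.ext
    intro w
    have hkey := decomp n b w (hnormal v hv)
    have h1 := congrArg L₁ hkey
    have h2 := congrArg L₂ hkey
    simp only [map_smul, map_add, smul_eq_mul] at h1 h2
    have hs : dot b b * dot n (perp b) ≠ 0 := mul_ne_zero hbb hnpb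
    have : dot b b * dot n (perp b) * L₁ w = dot b b * dot n (perp b) * L₂ w := by
      rw [h1, h2, hLb, hLn]
    exact mul_left_cancel₀ hs this
end
end
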